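/- The adjusted Shapley inconsistency value satisfies Distribution: for every rule-based inconsistency measure I and rule base B, the sum over all α ∈ B of S*_α^I(B) equals I(B). -/

import Mathlib

open scoped Classical

/-- A rule over atoms `A`: literals are pairs (atom, sign). -/
structure Rule (A : Type*) where
  body : Finset (A × Bool)
  head : A × Bool
deriving DecidableEq

abbrev RuleBase (A : Type*) := Finset (Rule A)

variable {A : Type*}

/-- The complement of a literal. -/
def litCompl (l : A × Bool) : A × Bool := (l.1, !l.2)

/-- The fact with head `l` (empty body). -/
def factR (l : A × Bool) : Rule A := ⟨∅, l⟩

/-- The facts (empty-body rules) of a rule base. -/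
noncomputable def facts [DecidableEq A] (B : RuleBase A) : RuleBase A :=
  B.filter (fun r => r.body = ∅)

/-- The proper (non-fact) rules of a rule base. -/
noncomputable def properRules [DecidableEq A] (B : RuleBase A) : RuleBase A :=
  B.filter (fun r => r.body ≠ ∅)

/-- A set of literals is closed w.r.t. a rule base. -/
def Closed (B : RuleBase A) (M : Set (A × Bool)) : Prop :=
  ∀ r ∈ B, (↑r.body ⊆ M) → r.head ∈ M

/-- The minimal model: the smallest closed set of literals. -/
def minModel (B : RuleBase A) : Set (A × Bool) :=
  {l | ∀ M : Set (A × Bool), Closed B M → l ∈ M}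

/-- A set of literals is consistent if it contains no complementary pair. -/
def ConsistentLits (M : Set (A × Bool)) : Prop :=
  ¬ ∃ a : A, (a, true) ∈ M ∧ (a, false) ∈ M

/-- A rule base is consistent if its minimal model is consistent. -/
def Consistent (B : RuleBase A) : Prop := ConsistentLits (minModel B)

/-- The minimal inconsistent subsets of a rule base. -/
def MI (B : RuleBase A) : Set (RuleBase A) :=
  { M | M ⊆ B ∧ ¬ Consistent M ∧ ∀ M' ⊂ M, Consistent M' }

/-- `M` contains a complementary pair of facts. -/
def hasComplFactPair (M : RuleBase A) : Prop :=
  ∃ a : A, factR (a, true) ∈ M ∧ factR (a, false) ∈ M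

/-- Minimal inconsistent subsets containing no complementary pair of facts. -/
def MIF (B : RuleBase A) : Set (RuleBase A) :=
  { M ∈ MI B | ¬ hasComplFactPair M }

/-- A formula is free in a rule base if it belongs to no minimal inconsistent subset. -/
def Free (r : Rule A) (B : RuleBase A) : Prop := ∀ M ∈ MI B, r ∉ M

/-- Rule consistency: the rules together with any consistent set of facts are consistent. -/
def RuleConsistent [DecidableEq A] (B : RuleBase A) : Prop :=
  ∀ F' ⊆ facts B, Consistent F' → Consistent (properRules B ∪ F')

/-- The drastic inconsistency measure. -/
noncomputable def Idr (B : RuleBase A) : ℕ := if Consistent B then 0 else 1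

/-- The rule-based drastic inconsistency measure. -/
noncomputable def IRBd (B : RuleBase A) : ℕ := if MIF B = ∅ then 0 else 1

/-- The rule-based MI-inconsistency measure. -/
noncomputable def IRBMI (B : RuleBase A) : ℕ := (MIF B).ncard

/-- The rule-based problematic inconsistency measure: number of distinct
    non-fact rules occurring in some element of `MIF B`. -/
noncomputable def IRBp (B : RuleBase A) : ℕ :=
  {r : Rule A | r.body ≠ ∅ ∧ ∃ M ∈ MIF B, r ∈ M}.ncard

/-- Three truth values. -/
inductive TV | t | b | f
deriving DecidableEq

def TV.negv : TV → TV
  | .t => .f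
  | .f => .t
  | .b => .b

/-- Value of a literal under a three-valued interpretation. -/
def litVal (v : A → TV) (l : A × Bool) : TV :=
  if l.2 then v l.1 else (v l.1).negv

/-- Designated truth values. -/
def TV.des : TV → Prop
  | .f => False
  | _ => True

/-- Three-valued satisfaction of a rule. -/
def sat3 (v : A → TV) (r : Rule A) : Prop :=
  (∀ l ∈ r.body, (litVal v l).des) → (litVal v r.head).des

/-- The rule-based contension inconsistency measure. -/
noncomputable def IRBc (B : RuleBase A) : ℕ :=
  sInf { n : ℕ | ∃ v : A → TV,
    (∀ M ∈ MIF B, ∀ r ∈ M, sat3 v r) ∧ n = {a : A | v a = TV.b}.ncard }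

/-- The payoff of `α` in coalition `C` (w.r.t. rule base `B` and measure `I`). -/
noncomputable def CoalPayoff [DecidableEq A] (I : RuleBase A → ℝ) (B : RuleBase A)
    (α : Rule A) (C : RuleBase A) : ℝ :=
  ((Nat.factorial (C.card - 1) * Nat.factorial (B.card - C.card) : ℕ) : ℝ)
    / ((Nat.factorial B.card : ℕ) : ℝ) * (I C - I (C.erase α))

/-- The additional payoff shifted from facts to non-free rules. -/
noncomputable def AddPayoff [DecidableEq A] (I : RuleBase A → ℝ) (B : RuleBase A)
    (r : Rule A) (C : RuleBase A) : ℝ :=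
  if Free r C then 0
  else (∑ f ∈ C.filter (fun x => x.body = ∅), CoalPayoff I B f C)
        / ((C.filter (fun x => x.body ≠ ∅ ∧ ¬ Free x C)).card : ℝ)

/-- The adjusted Shapley inconsistency value. -/
noncomputable def Sstar [DecidableEq A] (I : RuleBase A → ℝ) (B : RuleBase A)
    (α : Rule A) : ℝ :=
  if α.body = ∅ then 0
  else ∑ C ∈ B.powerset, (CoalPayoff I B α C + AddPayoff I B α C)


/-!
Inside each coalition `C`, the adjusted value only moves the total classical payoff of the facts
of `C` onto the non-free proper rules of `C`, in equal shares, so the per-coalition total is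
unchanged. The one exception is a coalition without non-free proper rules; but then `C` and all
its subsets are rule-consistent, so `I` vanishes on them and the facts had payoff zero anyway.
Summing over coalitions leaves the classical Shapley total, which is `I B` by efficiency: the
weights `w c = (c - 1)! (n - c)! / n!` telescope because `c * w c` and `(n - c) * w (c + 1)` both
equal `1 / choose n c`.
-/

section ShapleyEfficiency

variable {R : Type*} [DecidableEq R]

noncomputable def shapleyWeight (n c : ℕ) : ℝ :=
  ((Nat.factorial (c - 1) * Nat.factorial (n - c) : ℕ) : ℝ) / ((Nat.factorial n : ℕ) : ℝ)

lemma natCast_mul_shapleyWeight {n c : ℕ} (hc : 0 < c) (hcn : c ≤ n) :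
    (c : ℝ) * shapleyWeight n c = ((n.choose c : ℕ) : ℝ)⁻¹ := by
  rw [shapleyWeight, Nat.cast_choose ℝ hcn, inv_div, ← Nat.mul_factorial_pred hc.ne']
  push_cast
  ring

lemma natCast_sub_mul_shapleyWeight_succ {n c : ℕ} (hcn : c < n) :
    ((n - c : ℕ) : ℝ) * shapleyWeight n (c + 1) = ((n.choose c : ℕ) : ℝ)⁻¹ := by
  have hsub : n - (c + 1) = n - c - 1 := by omega
  rw [shapleyWeight, Nat.cast_choose ℝ hcn.le, inv_div, Nat.add_sub_cancel, hsub,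
    ← Nat.mul_factorial_pred (Nat.sub_ne_zero_of_lt hcn)]
  push_cast
  ring

lemma natCast_mul_shapleyWeight_sub {n c : ℕ} (hcn : c ≤ n) :
    (c : ℝ) * shapleyWeight n c - ((n - c : ℕ) : ℝ) * shapleyWeight n (c + 1)
      = (if c = n then 1 else 0) - (if c = 0 then 1 else 0) := by
  rcases Nat.eq_zero_or_pos c with rfl | hc
  · rcases Nat.eq_zero_or_pos n with rfl | hn
    · simp
    · rw [natCast_sub_mul_shapleyWeight_succ hn]
      simp [hn.ne]
  · rcases hcn.eq_or_lt with rfl | hcn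
    · rw [natCast_mul_shapleyWeight hc le_rfl]
      simp [hc.ne']
    · rw [natCast_mul_shapleyWeight hc hcn.le, natCast_sub_mul_shapleyWeight_succ hcn]
      simp [hc.ne', hcn.ne]

lemma sum_powerset_sum_erase {M : Type*} [AddCommMonoid M] (B : Finset R)
    (f : Finset R → R → M) :
    ∑ C ∈ B.powerset, ∑ α ∈ C, f (C.erase α) α
      = ∑ D ∈ B.powerset, ∑ α ∈ B \ D, f D α := by
  rw [Finset.sum_sigma', Finset.sum_sigma']
  refine Finset.sum_nbij' (fun p => ⟨p.1.erase p.2, p.2⟩) (fun p => ⟨insert p.2 p.1, p.2⟩)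
    ?_ ?_ ?_ ?_ (fun _ _ => rfl)
  · rintro ⟨C, α⟩ hp
    simp only [Finset.mem_sigma, Finset.mem_powerset] at hp ⊢
    exact ⟨(C.erase_subset α).trans hp.1, by simp [hp.1 hp.2]⟩
  · rintro ⟨D, α⟩ hp
    simp only [Finset.mem_sigma, Finset.mem_powerset, Finset.mem_sdiff] at hp ⊢
    exact ⟨Finset.insert_subset hp.2.1 hp.1, D.mem_insert_self α⟩
  · rintro ⟨C, α⟩ hp
    simp only [Finset.mem_sigma] at hp
    simp [Finset.insert_erase hp.2]
  · rintro ⟨D, α⟩ hp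
    simp only [Finset.mem_sigma, Finset.mem_sdiff] at hp
    simp [Finset.erase_insert hp.2.2]

theorem sum_powerset_sum_shapleyWeight_mul_sub (v : Finset R → ℝ) (hv : v ∅ = 0)
    (B : Finset R) :
    ∑ C ∈ B.powerset, ∑ α ∈ C, shapleyWeight B.card C.card * (v C - v (C.erase α)) = v B := by
  set n := B.card
  have hremoved : ∑ C ∈ B.powerset, ∑ α ∈ C, shapleyWeight n C.card * v (C.erase α)
      = ∑ D ∈ B.powerset, ((n - D.card : ℕ) : ℝ) * shapleyWeight n (D.card + 1) * v D := by
    calc ∑ C ∈ B.powerset, ∑ α ∈ C, shapleyWeight n C.card * v (C.erase α)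
        = ∑ C ∈ B.powerset, ∑ α ∈ C,
            shapleyWeight n ((C.erase α).card + 1) * v (C.erase α) := by
          refine Finset.sum_congr rfl fun C _ => Finset.sum_congr rfl fun α hα => ?_
          rw [Finset.card_erase_add_one hα]
      _ = ∑ D ∈ B.powerset, ∑ _α ∈ B \ D, shapleyWeight n (D.card + 1) * v D :=
          sum_powerset_sum_erase B fun D _ => shapleyWeight n (D.card + 1) * v D
      _ = _ := by
          refine Finset.sum_congr rfl fun D hD => ?_
          rw [Finset.sum_const, nsmul_eq_mul,
            Finset.card_sdiff_of_subset (Finset.mem_powerset.mp hD), mul_assoc]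
  have hcoeff : ∀ D ∈ B.powerset,
      (D.card : ℝ) * shapleyWeight n D.card * v D
        - ((n - D.card : ℕ) : ℝ) * shapleyWeight n (D.card + 1) * v D
        = (if D = B then v D else 0) - (if D = ∅ then v D else 0) := by
    intro D hD
    have hDB := Finset.mem_powerset.mp hD
    have hcard : D.card = n ↔ D = B :=
      ⟨fun h => Finset.eq_of_subset_of_card_le hDB h.ge, fun h => h ▸ rfl⟩
    rw [← sub_mul, natCast_mul_shapleyWeight_sub (Finset.card_le_card hDB),
      if_congr hcard rfl rfl, if_congr Finset.card_eq_zero rfl rfl, sub_mul,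
      ite_zero_mul, ite_zero_mul, one_mul]
  simp only [mul_sub, Finset.sum_sub_distrib, Finset.sum_const, nsmul_eq_mul]
  rw [hremoved, ← Finset.sum_sub_distrib]
  simp only [← mul_assoc]
  rw [Finset.sum_congr rfl hcoeff, Finset.sum_sub_distrib, Finset.sum_ite_eq',
    Finset.sum_ite_eq']
  simp [hv]

end ShapleyEfficiency

section MinimalInconsistentSubsets

lemma minModel_mono {K K' : RuleBase A} (h : K ⊆ K') : minModel K ⊆ minModel K' :=
  fun _ hl M hM => hl M fun r hr => hM r (h hr)

lemma Consistent.anti {K K' : RuleBase A} (h : K ⊆ K') (hc : Consistent K') : Consistent K :=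
  fun ⟨a, h1, h2⟩ => hc ⟨a, minModel_mono h h1, minModel_mono h h2⟩

lemma exists_mem_MI_of_not_consistent {K : RuleBase A} (h : ¬ Consistent K) :
    ∃ M, M ∈ MI K := by
  obtain ⟨M, ⟨hMK, hM⟩, hmin⟩ :=
    exists_minimal_of_wellFoundedLT (fun M : RuleBase A => M ⊆ K ∧ ¬ Consistent M) ⟨K, le_rfl, h⟩
  refine ⟨M, hMK, hM, fun M' hM' => by_contra fun hM'c => ?_⟩
  exact hM'.not_subset (hmin ⟨hM'.subset.trans hMK, hM'c⟩ hM'.subset)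

lemma MI_mono {C C' : RuleBase A} (h : C' ⊆ C) : MI C' ⊆ MI C :=
  fun _ hM => ⟨hM.1.trans h, hM.2⟩

lemma Free.of_notMem {r : Rule A} {C : RuleBase A} (h : r ∉ C) : Free r C :=
  fun _ hM hr => h (hM.1 hr)

lemma Free.anti {r : Rule A} {C C' : RuleBase A} (h : C' ⊆ C) (hr : Free r C) : Free r C' :=
  fun M hM => hr M (MI_mono h hM)

lemma ruleConsistent_of_forall_free [DecidableEq A] {C : RuleBase A}
    (hC : ∀ r ∈ C, r.body ≠ ∅ → Free r C) : RuleConsistent C := by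
  intro F hF hFc
  by_contra hcon
  obtain ⟨M, hMsub, hMinc, hMmin⟩ := exists_mem_MI_of_not_consistent hcon
  have hFC : F ⊆ C := hF.trans (Finset.filter_subset _ _)
  have hMC : M ⊆ C := hMsub.trans (Finset.union_subset (Finset.filter_subset _ _) hFC)
  have hMF : M ⊆ F := by
    intro r hr
    rcases Finset.mem_union.mp (hMsub hr) with hrule | hfact
    · exact absurd hr (hC r (hMC hr) (Finset.mem_filter.mp hrule).2 M ⟨hMC, hMinc, hMmin⟩)
    · exact hfact
  exact hMinc (hFc.anti hMF)

end MinimalInconsistentSubsets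

section AdjustedShapley

variable [DecidableEq A] {I : RuleBase A → ℝ} {B : RuleBase A}

lemma CoalPayoff_eq_shapleyWeight_mul (α : Rule A) (C : RuleBase A) :
    CoalPayoff I B α C = shapleyWeight B.card C.card * (I C - I (C.erase α)) :=
  rfl

lemma CoalPayoff_of_notMem {α : Rule A} {C : RuleBase A} (h : α ∉ C) :
    CoalPayoff I B α C = 0 := by
  rw [CoalPayoff, Finset.erase_eq_of_notMem h, sub_self, mul_zero]

lemma AddPayoff_of_free {r : Rule A} {C : RuleBase A} (h : Free r C) :
    AddPayoff I B r C = 0 :=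
  if_pos h

lemma CoalPayoff_eq_zero_of_forall_free (hRC : ∀ K : RuleBase A, I K = 0 ↔ RuleConsistent K)
    {C : RuleBase A} (hC : ∀ r ∈ C, r.body ≠ ∅ → Free r C) (α : Rule A) :
    CoalPayoff I B α C = 0 := by
  have hI : ∀ C' ⊆ C, I C' = 0 := fun C' hC' =>
    (hRC C').mpr (ruleConsistent_of_forall_free fun r hr hb => (hC r (hC' hr) hb).anti hC')
  rw [CoalPayoff, hI C subset_rfl, hI _ (C.erase_subset α), sub_self, mul_zero]

lemma sum_AddPayoff (hRC : ∀ K : RuleBase A, I K = 0 ↔ RuleConsistent K) (C : RuleBase A) :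
    ∑ r ∈ C.filter (fun x => x.body ≠ ∅), AddPayoff I B r C
      = ∑ f ∈ C.filter (fun x => x.body = ∅), CoalPayoff I B f C := by
  set T := C.filter (fun x => x.body ≠ ∅ ∧ ¬ Free x C)
  set S := ∑ f ∈ C.filter (fun x => x.body = ∅), CoalPayoff I B f C
  have hT : ∑ r ∈ C.filter (fun x => x.body ≠ ∅), AddPayoff I B r C
      = ∑ r ∈ T, AddPayoff I B r C := by
    refine (Finset.sum_subset (fun r hr => ?_) ?_).symm
    · exact Finset.mem_filter.mpr ⟨(Finset.mem_filter.mp hr).1, (Finset.mem_filter.mp hr).2.1⟩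
    intro r hr hrT
    simp only [Finset.mem_filter, T, not_and, not_not] at hr hrT
    exact AddPayoff_of_free (hrT hr.1 hr.2)
  have hshare : ∀ r ∈ T, AddPayoff I B r C = S / T.card :=
    fun r hr => if_neg (Finset.mem_filter.mp hr).2.2
  rw [hT, Finset.sum_congr rfl hshare, Finset.sum_const, nsmul_eq_mul]
  rcases T.eq_empty_or_nonempty with hTe | hTne
  · have hfree : ∀ r ∈ C, r.body ≠ ∅ → Free r C := fun r hr hb => by
      by_contra hnf
      exact Finset.notMem_empty r (hTe ▸ Finset.mem_filter.mpr ⟨hr, hb, hnf⟩)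
    have hS : S = 0 :=
      Finset.sum_eq_zero fun f _ => CoalPayoff_eq_zero_of_forall_free hRC hfree f
    rw [hTe, hS]
    simp
  · exact mul_div_cancel₀ S (Nat.cast_ne_zero.mpr hTne.card_pos.ne')

lemma sum_CoalPayoff_add_AddPayoff (hRC : ∀ K : RuleBase A, I K = 0 ↔ RuleConsistent K)
    {C : RuleBase A} (hCB : C ⊆ B) :
    ∑ α ∈ B.filter (fun x => x.body ≠ ∅), (CoalPayoff I B α C + AddPayoff I B α C)
      = ∑ α ∈ C, CoalPayoff I B α C := by
  have houtside : ∀ α ∈ B.filter (fun x => x.body ≠ ∅), α ∉ C.filter (fun x => x.body ≠ ∅) →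
      CoalPayoff I B α C + AddPayoff I B α C = 0 := by
    intro α hαB hαC
    have hα : α ∉ C := fun h => hαC (Finset.mem_filter.mpr ⟨h, (Finset.mem_filter.mp hαB).2⟩)
    rw [CoalPayoff_of_notMem hα, AddPayoff_of_free (Free.of_notMem hα), add_zero]
  rw [← Finset.sum_subset (Finset.filter_subset_filter _ hCB) houtside, Finset.sum_add_distrib,
    sum_AddPayoff hRC, Finset.sum_filter_not_add_sum_filter]

end AdjustedShapley

theorem stmt12_general [DecidableEq A] (I : RuleBase A → ℝ) (B : RuleBase A)
    (hRC : ∀ K : RuleBase A, I K = 0 ↔ RuleConsistent K) :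
    ∑ α ∈ B, Sstar I B α = I B := by
  have hI0 : I ∅ = 0 := (hRC ∅).mpr (ruleConsistent_of_forall_free (by simp))
  calc ∑ α ∈ B, Sstar I B α
      = ∑ α ∈ B.filter (fun x => x.body ≠ ∅),
          ∑ C ∈ B.powerset, (CoalPayoff I B α C + AddPayoff I B α C) := by
        rw [Finset.sum_filter]
        exact Finset.sum_congr rfl fun α _ => by by_cases h : α.body = ∅ <;> simp [Sstar, h]
    _ = ∑ C ∈ B.powerset, ∑ α ∈ C, CoalPayoff I B α C := by
        rw [Finset.sum_comm]
        exact Finset.sum_congr rfl fun C hC =>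
          sum_CoalPayoff_add_AddPayoff hRC (Finset.mem_powerset.mp hC)
    _ = I B := by
        simp only [CoalPayoff_eq_shapleyWeight_mul]
        exact sum_powerset_sum_shapleyWeight_mul_sub I hI0 B

theorem stmt12 [DecidableEq A] (I : RuleBase A → ℝ) (B : RuleBase A)
    (hRC : ∀ K : RuleBase A, I K = 0 ↔ RuleConsistent K)
    (hMO : ∀ K K' : RuleBase A, K ⊆ K' → I K ≤ I K')
    (hIN : ∀ (K : RuleBase A) (α : Rule A), α ∈ K → Free α K → I K = I (K.erase α)) :
    ∑ α ∈ B, Sstar I B α = I B :=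
  stmt12_general I B hRC
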